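/- arXiv:1906.02370 — 2 statements merged into one kernel-verified Lean document; each statement's English description precedes it below -/
import Mathlib

section
/- Let E and D be W*-graph correspondences over A = ℓ^∞(G⁰) and B = ℓ^∞(F⁰) associated to directed graphs G and F. If (ω, φ) : (E, A) → (D, B) is a W*-correspondence isomorphism, then G and F are isomorphic directed graphs: there exist bijections α : G¹ → F¹ and β : G⁰ → F⁰ with s₂(α(e)) = β(s₁(e)) and r₂(α(e)) = β(r₁(e)) for all e ∈ G¹. -/
open ComplexConjugate

/-- Membership in `ℓ^∞(I)`: bounded families of complex numbers. -/
def Bdd {I : Type*} (a : I → ℂ) : Prop := ∃ C, ∀ i, ‖a i‖ ≤ C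

/-- Membership in the graph correspondence `E` of a graph with source map `s`:
`sup_v Σ_{s(e)=v} |x(e)|² < ∞`. -/
def EBdd {G0 G1 : Type*} (s : G1 → G0) (x : G1 → ℂ) : Prop :=
  ∃ C, ∀ v : G0, (∑' e : {e : G1 // s e = v}, ‖x e.1‖ ^ 2) ≤ C

open Classical in
/-- Point mass at `i`. -/
noncomputable def dd {I : Type*} (i : I) : I → ℂ := fun j => if j = i then 1 else 0

lemma dd_self {I : Type*} (i : I) : dd i i = 1 := by simp [dd]

lemma dd_ne {I : Type*} {i j : I} (h : j ≠ i) : dd i j = 0 := by simp [dd, h]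

lemma dd_supp {I : Type*} {i j : I} (h : dd i j ≠ 0) : j = i := by
  by_contra hne; exact h (dd_ne hne)

lemma Bdd_dd {I : Type*} (i : I) : Bdd (dd i) := by
  refine ⟨1, fun j => ?_⟩
  unfold dd
  split <;> simp

lemma Bdd_zero {I : Type*} : Bdd (0 : I → ℂ) := ⟨0, by simp⟩

lemma Bdd_mul {I : Type*} {a b : I → ℂ} (ha : Bdd a) (hb : Bdd b) : Bdd (a * b) := by
  obtain ⟨C, hC⟩ := ha
  obtain ⟨D, hD⟩ := hb
  refine ⟨max C 0 * max D 0, fun i => ?_⟩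
  rw [Pi.mul_apply, norm_mul]
  exact mul_le_mul (le_max_of_le_left (hC i)) (le_max_of_le_left (hD i))
    (norm_nonneg _) (le_max_right _ _)

lemma Bdd_single {I : Type*} (a : I → ℂ) (v : I) (h : ∀ u, u ≠ v → a u = 0) : Bdd a := by
  refine ⟨‖a v‖, fun u => ?_⟩
  by_cases hu : u = v
  · subst hu; exact le_refl _
  · rw [h u hu]; simp

lemma dd_mul_self {I : Type*} (i : I) : dd i * dd i = dd i := by
  funext j
  simp only [Pi.mul_apply]
  unfold dd
  split <;> simp

lemma vals01 {I : Type*} {a : I → ℂ} (h : a * a = a) (i : I) : a i = 0 ∨ a i = 1 := by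
  have h' : a i * a i = a i := by simpa using congrFun h i
  rcases mul_eq_zero.mp (show a i * (a i - 1) = 0 by linear_combination h') with h0 | h1
  · exact Or.inl h0
  · exact Or.inr (by have := sub_eq_zero.mp h1; exact this)

lemma EBdd_single_fiber {G0 G1 : Type*} (s : G1 → G0) (x : G1 → ℂ) (v : G0)
    (h : ∀ e, x e ≠ 0 → s e = v) : EBdd s x := by
  refine ⟨max 0 (∑' e : {e : G1 // s e = v}, ‖x e.1‖ ^ 2), fun v0 => ?_⟩
  by_cases hv : v0 = v
  · subst hv; exact le_max_right _ _
  · have hz : ∀ e : {e : G1 // s e = v0}, ‖x e.1‖ ^ 2 = 0 := by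
      intro e
      have hx : x e.1 = 0 := by
        by_contra hx
        exact hv ((e.2).symm.trans (h e.1 hx))
      simp [hx]
    calc (∑' e : {e : G1 // s e = v0}, ‖x e.1‖ ^ 2) = 0 := by
          rw [tsum_congr hz]; exact tsum_zero
      _ ≤ _ := le_max_left _ _

lemma EBdd_dd {G0 G1 : Type*} (s : G1 → G0) (e : G1) : EBdd s (dd e) :=
  EBdd_single_fiber s (dd e) (s e) (fun g hg => by rw [dd_supp hg])

lemma tsum_subtype_eq_sum {I : Type*} (q p : I → Prop) [Fintype {i // p i}]
    (hpq : ∀ i, p i → q i) (g : I → ℂ) (hsupp : ∀ i, q i → g i ≠ 0 → p i) :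
    ∑' x : {i // q i}, g x.1 = ∑ t : {i // p i}, g t.1 := by
  classical
  have hinj : Function.Injective (fun t : {i // p i} => (⟨t.1, hpq t.1 t.2⟩ : {i // q i})) := by
    intro a b hab
    simpa [Subtype.ext_iff] using hab
  rw [tsum_eq_sum (s := Finset.univ.image (fun t : {i // p i} => (⟨t.1, hpq t.1 t.2⟩ : {i // q i})))
    (by
      intro b hb
      by_contra hgb
      exact hb (Finset.mem_image.mpr ⟨⟨b.1, hsupp b.1 b.2 hgb⟩, Finset.mem_univ _, rfl⟩))]
  rw [Finset.sum_image (fun a _ b _ h => hinj h)]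

lemma inner_dd_self {I0 I1 : Type*} (s : I1 → I0) (e : I1) :
    (fun v : I0 => ∑' g : {g : I1 // s g = v}, conj (dd e g.1) * dd e g.1) = dd (s e) := by
  funext v
  by_cases hv : s e = v
  · rw [tsum_eq_single (⟨e, hv⟩ : {g : I1 // s g = v})
      (by
        intro g hg
        have hne : g.1 ≠ e := fun h => hg (Subtype.ext h)
        rw [dd_ne hne]; simp)]
    simp [dd_self, dd, hv.symm]
  · have hz : ∀ g : {g : I1 // s g = v}, conj (dd e g.1) * dd e g.1 = 0 := by
      intro g
      have hne : g.1 ≠ e := fun h => hv (h ▸ g.2)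
      rw [dd_ne hne]; simp
    rw [tsum_congr hz, tsum_zero]
    rw [dd_ne (fun h => hv h.symm)]

lemma inner_dd_ne {I0 I1 : Type*} (s : I1 → I0) {e f : I1} (hef : e ≠ f) :
    (fun v : I0 => ∑' g : {g : I1 // s g = v}, conj (dd e g.1) * dd f g.1) = 0 := by
  funext v
  have hz : ∀ g : {g : I1 // s g = v}, conj (dd e g.1) * dd f g.1 = 0 := by
    intro g
    by_cases hg : g.1 = e
    · rw [hg, dd_ne hef]; simp
    · rw [dd_ne hg]; simp
  rw [tsum_congr hz, tsum_zero]; rfl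

lemma onb_card_le {ι T : Type*} [Fintype ι] [Fintype T] [DecidableEq ι] (Y : ι → T → ℂ)
    (h : ∀ a b, (∑ t, conj (Y a t) * Y b t) = if a = b then 1 else 0) :
    Fintype.card ι ≤ Fintype.card T := by
  have horth : Orthonormal ℂ (fun a => (WithLp.equiv 2 (T → ℂ)).symm (Y a)) := by
    rw [orthonormal_iff_ite]
    intro i j
    rw [PiLp.inner_apply]
    simpa [RCLike.inner_apply, mul_comm] using h i j
  have := horth.linearIndependent.fintype_card_le_finrank
  rwa [finrank_euclideanSpace] at this

lemma onb_finite {ι T : Type*} [Fintype T] [DecidableEq ι] (Y : ι → T → ℂ)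
    (h : ∀ a b, (∑ t, conj (Y a t) * Y b t) = if a = b then 1 else 0) :
    Finite ι ∧ Nat.card ι ≤ Nat.card T := by
  classical
  have hfin : Finite ι := by
    by_contra hinf
    rw [not_finite_iff_infinite] at hinf
    let emb : Fin (Fintype.card T + 1) ↪ ι := (Fin.valEmbedding).trans (Infinite.natEmbedding ι)
    have hcard := onb_card_le (fun a => Y (emb a)) (fun a b => by
      rw [h (emb a) (emb b)]
      simp [emb.injective.eq_iff])
    rw [Fintype.card_fin] at hcard
    omega
  refine ⟨hfin, ?_⟩
  letI := Fintype.ofFinite ι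
  have := onb_card_le Y h
  simpa [Nat.card_eq_fintype_card] using this

/-!
STATEMENT 12. Let `E`, `D` be the W*-graph correspondences of countable directed
graphs `G = (G⁰,G¹,s₁,r₁)` and `F = (F⁰,F¹,s₂,r₂)`.  If
`(ω, φ) : (E, ℓ^∞(G⁰)) → (D, ℓ^∞(F⁰))` is a W*-correspondence isomorphism
(`ω` a *-isomorphism, `φ` a linear bijection with `φ(a·x·b) = ω(a)·φ(x)·ω(b)` and
`⟨φ x, φ y⟩_B = ω⟨x, y⟩_A`), then `G ≅ F` as directed graphs.
-/
set_option maxHeartbeats 1000000 in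
theorem stmt12 {G0 G1 F0 F1 : Type*}
    [Countable G0] [Countable G1] [Countable F0] [Countable F1]
    (s1 r1 : G1 → G0) (s2 r2 : F1 → F0)
    (ω : (G0 → ℂ) → (F0 → ℂ)) (φ : (G1 → ℂ) → (F1 → ℂ))
    -- ω is a *-isomorphism of ℓ^∞(G⁰) onto ℓ^∞(F⁰)
    (hω_bdd : ∀ a, Bdd a → Bdd (ω a))
    (hω_surj : ∀ b, Bdd b → ∃ a, Bdd a ∧ ω a = b)
    (hω_inj : ∀ a a', Bdd a → Bdd a' → ω a = ω a' → a = a')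
    (hω_add : ∀ a a', Bdd a → Bdd a' → ω (a + a') = ω a + ω a')
    (hω_smul : ∀ (c : ℂ) a, Bdd a → ω (c • a) = c • ω a)
    (hω_mul : ∀ a a', Bdd a → Bdd a' → ω (a * a') = ω a * ω a')
    (hω_star : ∀ a, Bdd a → ω (star a) = star (ω a))
    (hω_one : ω 1 = 1)
    -- φ is a linear bijection of E onto D
    (hφ_bdd : ∀ x, EBdd s1 x → EBdd s2 (φ x))
    (hφ_surj : ∀ y, EBdd s2 y → ∃ x, EBdd s1 x ∧ φ x = y)
    (hφ_inj : ∀ x x', EBdd s1 x → EBdd s1 x' → φ x = φ x' → x = x')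
    (hφ_add : ∀ x x', EBdd s1 x → EBdd s1 x' → φ (x + x') = φ x + φ x')
    (hφ_smul : ∀ (c : ℂ) x, EBdd s1 x → φ (c • x) = c • φ x)
    -- φ intertwines the bimodule actions: φ(a·x·b) = ω(a)·φ(x)·ω(b)
    (hmod : ∀ a x b, Bdd a → EBdd s1 x → Bdd b →
        φ (fun e => a (r1 e) * x e * b (s1 e))
          = fun e' => ω a (r2 e') * φ x e' * ω b (s2 e'))
    -- φ preserves the inner products: ⟨φ x, φ y⟩_B = ω ⟨x,y⟩_A
    (hinner : ∀ x y, EBdd s1 x → EBdd s1 y →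
        (fun v' : F0 => ∑' e' : {e' : F1 // s2 e' = v'}, conj (φ x e'.1) * φ y e'.1)
          = ω (fun v : G0 => ∑' e : {e : G1 // s1 e = v}, conj (x e.1) * y e.1)) :
    ∃ (α : G1 ≃ F1) (β : G0 ≃ F0),
      ∀ e, s2 (α e) = β (s1 e) ∧ r2 (α e) = β (r1 e) := by
  classical
  have hω0 : ω 0 = 0 := by
    have h : ω 0 = ω 0 + ω 0 := by
      have := hω_add 0 0 Bdd_zero Bdd_zero
      simpa using this
    exact left_eq_add.mp h
  -- Step 1: ω sends point masses to point masses
  have step1 : ∀ v : G0, ∃ w : F0, ω (dd v) = dd w := by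
    intro v
    have hpp : ω (dd v) * ω (dd v) = ω (dd v) := by
      rw [← hω_mul _ _ (Bdd_dd v) (Bdd_dd v), dd_mul_self]
    have hex : ∃ w, ω (dd v) w = 1 := by
      by_contra hno
      push_neg at hno
      have hp0 : ω (dd v) = 0 := by
        funext u
        rcases vals01 hpp u with h | h
        · simpa using h
        · exact absurd h (hno u)
      have hd0 : dd v = 0 := hω_inj _ _ (Bdd_dd v) Bdd_zero (by rw [hp0, hω0])
      have h1 := congrFun hd0 v
      rw [dd_self] at h1
      exact one_ne_zero h1
    obtain ⟨w, hw⟩ := hex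
    obtain ⟨a, hab, ha⟩ := hω_surj (dd w) (Bdd_dd w)
    have haa : a * a = a :=
      hω_inj _ _ (Bdd_mul hab hab) hab (by rw [hω_mul _ _ hab hab, ha, dd_mul_self])
    have hadv : a * dd v = a := by
      apply hω_inj _ _ (Bdd_mul hab (Bdd_dd v)) hab
      rw [hω_mul _ _ hab (Bdd_dd v), ha]
      funext u
      by_cases hu : u = w
      · subst hu
        rw [Pi.mul_apply, dd_self, one_mul, hw]
      · rw [Pi.mul_apply, dd_ne hu, zero_mul]
    have hsupp : ∀ u, u ≠ v → a u = 0 := by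
      intro u hu
      have h := congrFun hadv u
      rw [Pi.mul_apply, dd_ne hu, mul_zero] at h
      exact h.symm
    have hav : a v = 1 := by
      rcases vals01 haa v with h | h
      · exfalso
        have ha0 : a = 0 := by
          funext u
          by_cases hu : u = v
          · subst hu; simpa using h
          · simpa using hsupp u hu
        rw [ha0, hω0] at ha
        have h1 := congrFun ha w
        rw [dd_self] at h1
        simp at h1
      · exact h
    refine ⟨w, ?_⟩
    have hav' : a = dd v := by
      funext u
      by_cases hu : u = v
      · subst hu; rw [dd_self]; exact hav
      · rw [hsupp u hu, dd_ne hu]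
    rw [← hav', ha]
  choose B hB using step1
  -- B is bijective
  have Bkey : ∀ (a : G0 → ℂ), Bdd a → ∀ w u, ω a = dd w → a u = 1 → B u = w := by
    intro a hab w u hωa hu
    have hdua : dd u * a = dd u := by
      funext j
      by_cases hj : j = u
      · subst hj; rw [Pi.mul_apply, dd_self, one_mul, hu]
      · rw [Pi.mul_apply, dd_ne hj, zero_mul]
    have h2 : dd (B u) * dd w = dd (B u) := by
      rw [← hB u, ← hωa, ← hω_mul _ _ (Bdd_dd u) hab, hdua]
    have h3 := congrFun h2 (B u)
    rw [Pi.mul_apply, dd_self, one_mul] at h3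
    by_contra hne
    rw [dd_ne hne] at h3
    exact zero_ne_one h3
  have Bsurj : Function.Surjective B := by
    intro w
    obtain ⟨a, hab, ha⟩ := hω_surj (dd w) (Bdd_dd w)
    have haa : a * a = a :=
      hω_inj _ _ (Bdd_mul hab hab) hab (by rw [hω_mul _ _ hab hab, ha, dd_mul_self])
    have hex : ∃ v, a v = 1 := by
      by_contra hno
      push_neg at hno
      have ha0 : a = 0 := by
        funext u
        rcases vals01 haa u with h | h
        · simpa using h
        · exact absurd h (hno u)
      rw [ha0, hω0] at ha
      have h1 := congrFun ha w
      rw [dd_self] at h1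
      simp at h1
    obtain ⟨v, hv⟩ := hex
    exact ⟨v, Bkey a hab w v ha hv⟩
  have Binj : Function.Injective B := by
    intro v v' h
    have hd : dd v = dd v' := hω_inj _ _ (Bdd_dd v) (Bdd_dd v') (by rw [hB, hB, h])
    by_contra hne
    have h1 := congrFun hd v
    rw [dd_self, dd_ne hne] at h1
    exact one_ne_zero h1
  -- support lemmas
  have supp_fwd : ∀ (v w : G0) (x : G1 → ℂ), EBdd s1 x →
      (∀ e, x e ≠ 0 → s1 e = v ∧ r1 e = w) →
      ∀ e', φ x e' ≠ 0 → s2 e' = B v ∧ r2 e' = B w := by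
    intro v w x hx hsx e' hne
    have hm := hmod (dd w) x (dd v) (Bdd_dd w) hx (Bdd_dd v)
    have hres : (fun e => dd w (r1 e) * x e * dd v (s1 e)) = x := by
      funext e
      by_cases hxe : x e = 0
      · rw [hxe, mul_zero, zero_mul]
      · rw [(hsx e hxe).1, (hsx e hxe).2, dd_self, dd_self, one_mul, mul_one]
    rw [hres, hB, hB] at hm
    have heq : φ x e' = dd (B w) (r2 e') * φ x e' * dd (B v) (s2 e') := congrFun hm e'
    constructor
    · by_contra h2
      rw [dd_ne h2, mul_zero] at heq
      exact hne heq
    · by_contra h2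
      rw [dd_ne h2, zero_mul, zero_mul] at heq
      exact hne heq
  have supp_bwd : ∀ (v w : G0) (x : G1 → ℂ), EBdd s1 x →
      (∀ e', φ x e' ≠ 0 → s2 e' = B v ∧ r2 e' = B w) →
      ∀ e, x e ≠ 0 → s1 e = v ∧ r1 e = w := by
    intro v w x hx hsy
    have hx'b : EBdd s1 (fun e => dd w (r1 e) * x e * dd v (s1 e)) := by
      apply EBdd_single_fiber _ _ v
      intro e he
      by_contra hne
      exact he (show dd w (r1 e) * x e * dd v (s1 e) = 0 by rw [dd_ne hne, mul_zero])
    have hm := hmod (dd w) x (dd v) (Bdd_dd w) hx (Bdd_dd v)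
    rw [hB, hB] at hm
    have hφeq : φ (fun e => dd w (r1 e) * x e * dd v (s1 e)) = φ x := by
      rw [hm]
      funext e'
      show dd (B w) (r2 e') * φ x e' * dd (B v) (s2 e') = φ x e'
      by_cases hne : φ x e' = 0
      · rw [hne, mul_zero, zero_mul]
      · rw [(hsy e' hne).1, (hsy e' hne).2, dd_self, dd_self, one_mul, mul_one]
    have hxx := hφ_inj _ _ hx'b hx hφeq
    intro e he
    have hxe : dd w (r1 e) * x e * dd v (s1 e) = x e := congrFun hxx e
    constructor
    · by_contra h2
      exact he (by rw [← hxe, dd_ne h2, mul_zero])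
    · by_contra h2
      exact he (by rw [← hxe, dd_ne h2, zero_mul, zero_mul])
  -- orthonormality of images of point masses
  have ortho_fwd : ∀ (v : G0) (e f : G1), s1 e = v → s1 f = v →
      (∑' g : {g : F1 // s2 g = B v}, conj (φ (dd e) g.1) * φ (dd f) g.1)
        = if e = f then 1 else 0 := by
    intro v e f hse hsf
    have h := hinner (dd e) (dd f) (EBdd_dd s1 e) (EBdd_dd s1 f)
    by_cases hef : e = f
    · subst hef
      rw [if_pos rfl]
      rw [inner_dd_self s1 e, hse, hB] at h
      have h2 : (∑' g : {g : F1 // s2 g = B v}, conj (φ (dd e) g.1) * φ (dd e) g.1)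
          = dd (B v) (B v) := congrFun h (B v)
      rw [dd_self] at h2
      exact h2
    · rw [if_neg hef]
      rw [inner_dd_ne s1 hef, hω0] at h
      have h2 : (∑' g : {g : F1 // s2 g = B v}, conj (φ (dd e) g.1) * φ (dd f) g.1)
          = (0 : F0 → ℂ) (B v) := congrFun h (B v)
      simpa using h2
  -- forward counting
  have fwd_count : ∀ v w : G0, Finite {g : F1 // s2 g = B v ∧ r2 g = B w} →
      Finite {e : G1 // s1 e = v ∧ r1 e = w} ∧
        Nat.card {e : G1 // s1 e = v ∧ r1 e = w}
          ≤ Nat.card {g : F1 // s2 g = B v ∧ r2 g = B w} := by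
    intro v w hT
    letI := Fintype.ofFinite {g : F1 // s2 g = B v ∧ r2 g = B w}
    have horth : ∀ a b : {e : G1 // s1 e = v ∧ r1 e = w},
        (∑ t : {g : F1 // s2 g = B v ∧ r2 g = B w}, conj (φ (dd a.1) t.1) * φ (dd b.1) t.1)
          = if a = b then 1 else 0 := by
      intro a b
      have hsa : ∀ g, s2 g = B v → conj (φ (dd a.1) g) * φ (dd b.1) g ≠ 0 →
          s2 g = B v ∧ r2 g = B w := by
        intro g hq hne
        have hfa : φ (dd a.1) g ≠ 0 := fun h0 => hne (by rw [h0]; simp)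
        exact supp_fwd v w (dd a.1) (EBdd_dd s1 a.1)
          (fun e0 he0 => by rw [dd_supp he0]; exact a.2) g hfa
      rw [← tsum_subtype_eq_sum (fun g => s2 g = B v) (fun g => s2 g = B v ∧ r2 g = B w)
        (fun g hg => hg.1) _ hsa]
      rw [ortho_fwd v a.1 b.1 a.2.1 b.2.1]
      by_cases hab : a = b
      · rw [if_pos hab, if_pos (congrArg Subtype.val hab)]
      · rw [if_neg hab, if_neg (fun hh => hab (Subtype.ext hh))]
    exact onb_finite _ horth
  -- backward counting
  have bwd_count : ∀ v w : G0, Finite {e : G1 // s1 e = v ∧ r1 e = w} →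
      Finite {g : F1 // s2 g = B v ∧ r2 g = B w} ∧
        Nat.card {g : F1 // s2 g = B v ∧ r2 g = B w}
          ≤ Nat.card {e : G1 // s1 e = v ∧ r1 e = w} := by
    intro v w hS
    letI := Fintype.ofFinite {e : G1 // s1 e = v ∧ r1 e = w}
    have hsurjx : ∀ t : {g : F1 // s2 g = B v ∧ r2 g = B w}, ∃ x, EBdd s1 x ∧ φ x = dd t.1 :=
      fun t => hφ_surj (dd t.1) (EBdd_dd s2 t.1)
    choose x hxE hxφ using hsurjx
    have hsuppx : ∀ t, ∀ e, x t e ≠ 0 → s1 e = v ∧ r1 e = w := by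
      intro t
      apply supp_bwd v w (x t) (hxE t)
      intro e' h
      rw [hxφ t] at h
      rw [dd_supp h]
      exact t.2
    have horth : ∀ t u : {g : F1 // s2 g = B v ∧ r2 g = B w},
        (∑ a : {e : G1 // s1 e = v ∧ r1 e = w}, conj (x t a.1) * x u a.1)
          = if t = u then 1 else 0 := by
      intro t u
      have h := hinner (x t) (x u) (hxE t) (hxE u)
      rw [hxφ t, hxφ u] at h
      have hBddin : Bdd (fun v0 : G0 => ∑' e : {e : G1 // s1 e = v0}, conj (x t e.1) * x u e.1) := by
        apply Bdd_single _ v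
        intro u0 hu0
        have hz : ∀ e : {e : G1 // s1 e = u0}, conj (x t e.1) * x u e.1 = 0 := by
          intro e
          have hx0 : x t e.1 = 0 := by
            by_contra hxe
            exact hu0 (e.2.symm.trans (hsuppx t e.1 hxe).1)
          rw [hx0]; simp
        rw [tsum_congr hz]; exact tsum_zero
      have hval : (fun v0 : G0 => ∑' e : {e : G1 // s1 e = v0}, conj (x t e.1) * x u e.1)
          = if t = u then dd v else 0 := by
        by_cases htu : t = u
        · subst htu
          rw [if_pos rfl]
          apply hω_inj _ _ hBddin (Bdd_dd v)
          rw [← h, inner_dd_self s2 t.1, t.2.1, hB]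
        · rw [if_neg htu]
          apply hω_inj _ _ hBddin Bdd_zero
          rw [← h, inner_dd_ne s2 (fun hh => htu (Subtype.ext hh)), hω0]
      have h2 : (∑' e : {e : G1 // s1 e = v}, conj (x t e.1) * x u e.1)
          = (if t = u then dd v else (0 : G0 → ℂ)) v := congrFun hval v
      rw [← tsum_subtype_eq_sum (fun e => s1 e = v) (fun e => s1 e = v ∧ r1 e = w)
        (fun e he => he.1) (fun e => conj (x t e) * x u e) (by
          intro e he hne
          have hxe : x t e ≠ 0 := fun h0 => hne (show conj (x t e) * x u e = 0 by rw [h0]; simp)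
          exact hsuppx t e hxe)]
      rw [h2]
      by_cases htu : t = u
      · rw [if_pos htu, if_pos htu, dd_self]
      · rw [if_neg htu, if_neg htu]; rfl
    exact onb_finite _ horth
  -- fiberwise equivalences
  have key : ∀ vw : G0 × G0,
      Nonempty ({e : G1 // s1 e = vw.1 ∧ r1 e = vw.2}
        ≃ {g : F1 // s2 g = B vw.1 ∧ r2 g = B vw.2}) := by
    rintro ⟨v, w⟩
    by_cases hT : Finite {g : F1 // s2 g = B v ∧ r2 g = B w}
    · obtain ⟨hS, hle⟩ := fwd_count v w hT
      obtain ⟨_, hge⟩ := bwd_count v w hS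
      haveI := hS; haveI := hT
      exact Finite.card_eq.mp (le_antisymm hle hge)
    · have hS : ¬ Finite {e : G1 // s1 e = v ∧ r1 e = w} := fun hh => hT (bwd_count v w hh).1
      rw [not_finite_iff_infinite] at hT hS
      haveI := hT; haveI := hS
      exact nonempty_equiv_of_countable
  let σ : ∀ vw : G0 × G0, {e : G1 // s1 e = vw.1 ∧ r1 e = vw.2}
      ≃ {g : F1 // s2 g = B vw.1 ∧ r2 g = B vw.2} := fun vw => (key vw).some
  let A1 : G1 → F1 := fun e => (σ (s1 e, r1 e) ⟨e, ⟨rfl, rfl⟩⟩).1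
  have hA1 : ∀ e : G1, s2 (A1 e) = B (s1 e) ∧ r2 (A1 e) = B (r1 e) :=
    fun e => (σ (s1 e, r1 e) ⟨e, ⟨rfl, rfl⟩⟩).2
  have αeq : ∀ (e : G1) (v0 w0 : G0) (h1 : s1 e = v0) (h2 : r1 e = w0),
      A1 e = (σ (v0, w0) ⟨e, ⟨h1, h2⟩⟩).1 := by
    intro e v0 w0 h1 h2
    subst h1; subst h2
    rfl
  have hinjA : Function.Injective A1 := by
    intro e f hef
    have hs : s1 e = s1 f := Binj (by rw [← (hA1 e).1, ← (hA1 f).1, hef])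
    have hr : r1 e = r1 f := Binj (by rw [← (hA1 e).2, ← (hA1 f).2, hef])
    have h1 : A1 e = (σ (s1 e, r1 e) ⟨e, ⟨rfl, rfl⟩⟩).1 := rfl
    have h2 : A1 f = (σ (s1 e, r1 e) ⟨f, ⟨hs.symm, hr.symm⟩⟩).1 :=
      αeq f (s1 e) (r1 e) hs.symm hr.symm
    have h3 : (σ (s1 e, r1 e)) ⟨e, ⟨rfl, rfl⟩⟩ = (σ (s1 e, r1 e)) ⟨f, ⟨hs.symm, hr.symm⟩⟩ :=
      Subtype.ext (by rw [← h1, ← h2, hef])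
    exact Subtype.ext_iff.mp ((σ (s1 e, r1 e)).injective h3)
  have hsurjA : Function.Surjective A1 := by
    intro g
    obtain ⟨v, hv⟩ := Bsurj (s2 g)
    obtain ⟨w, hw⟩ := Bsurj (r2 g)
    have ht : s2 g = B v ∧ r2 g = B w := ⟨hv.symm, hw.symm⟩
    set t : {g' : F1 // s2 g' = B v ∧ r2 g' = B w} := ⟨g, ht⟩ with htdef
    refine ⟨((σ (v, w)).symm t).1, ?_⟩
    have he0 := ((σ (v, w)).symm t).2
    have h1 : A1 ((σ (v, w)).symm t).1
        = (σ (v, w) ⟨((σ (v, w)).symm t).1, ⟨he0.1, he0.2⟩⟩).1 :=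
      αeq _ v w he0.1 he0.2
    have h2 : (⟨((σ (v, w)).symm t).1, ⟨he0.1, he0.2⟩⟩ : {e : G1 // s1 e = v ∧ r1 e = w})
        = (σ (v, w)).symm t := Subtype.ext rfl
    rw [h1, h2, Equiv.apply_symm_apply]
  refine ⟨Equiv.ofBijective A1 ⟨hinjA, hsurjA⟩, Equiv.ofBijective B ⟨Binj, Bsurj⟩, ?_⟩
  intro e
  exact ⟨(hA1 e).1, (hA1 e).2⟩
end

section
/- Let (E, A) be the W*-graph correspondence of a countable directed graph G and σ : A → B(H) a faithful normal representation with H = ⊕_{v} H_v. An intertwiner η* = (T_{v,e}) ∈ (E^σ)* lies in the center 𝔷((E^σ)*) of the correspondence E^σ over σ(A)' if and only if T_{v,e} = z_e I_{H_{s(e)}} for some scalar z_e when e is a loop (s(e) = r(e) = v), and T_{v,e} = 0 otherwise. -/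
open ContinuousLinearMap

lemma auxScalar {V : Type*} [NormedAddCommGroup V] [InnerProductSpace ℂ V]
    [CompleteSpace V] (T : V →L[ℂ] V)
    (hc : ∀ k : V →L[ℂ] V, T.comp k = k.comp T) :
    ∃ z : ℂ, ∀ x : V, T x = z • x := by
  by_cases hV : ∀ x : V, x = 0
  · exact ⟨0, fun x => by rw [hV x, hV (T 0)]; simp⟩
  · push_neg at hV
    obtain ⟨u, hu⟩ := hV
    have hu2 : (@inner ℂ V _ u u) ≠ 0 := by
      exact inner_self_ne_zero.2 hu
    refine ⟨(@inner ℂ V _ u (T u)) / (@inner ℂ V _ u u), fun x => ?_⟩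
    have hk := hc ((innerSL ℂ u).smulRight x)
    have := congrFun (congrArg DFunLike.coe hk) u
    simp only [coe_comp', Function.comp_apply, smulRight_apply, innerSL_apply_apply,
      map_smul] at this
    rw [div_eq_mul_inv, mul_comm, mul_smul, ← this, inv_smul_smul₀ hu2]

lemma auxCast {G0 : Type*} {H : G0 → Type*}
    [∀ v, NormedAddCommGroup (H v)] [∀ v, InnerProductSpace ℂ (H v)]
    [∀ v, CompleteSpace (H v)] {v w : G0} (h : v = w) (T : H v →L[ℂ] H w)
    (hc : ∀ k : H v →L[ℂ] H v, T.comp k = (h ▸ k : H w →L[ℂ] H w).comp T) :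
    ∃ z : ℂ, ∀ x : H v, T x = z • cast (congrArg H h) x := by
  subst h
  simpa using auxScalar T (by simpa using hc)

lemma auxCast2 {G0 : Type*} {H : G0 → Type*}
    [∀ v, NormedAddCommGroup (H v)] [∀ v, InnerProductSpace ℂ (H v)]
    {v w : G0} (h : v = w) (a : ∀ u, H u →L[ℂ] H u) (x : H v) :
    cast (congrArg H h) (a v x) = a w (cast (congrArg H h) x) := by
  subst h; simp

/-!
STATEMENT 15. Let `(E, A)` be the W*-graph correspondence of a countable directed
graph `G` and `σ : A → B(H)` a faithful normal representation, `H = ⊕_v H_v`,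
`σ(A)' = ⊕^∞_v B(H_v)`.  An intertwiner `η* = (T_{v,e}) ∈ (E^σ)*` (blocks
`T_{v,e} : H_{s(e)} → H_v`, supported on `v = r(e)`) lies in the center
`𝔷((E^σ)*)` — i.e. `a·η = η·a` for every `a ∈ σ(A)'`, blockwise
`T_{v,e} ∘ a_{s(e)} = a_v ∘ T_{v,e}` for all uniformly bounded families
`a = ⊕ a_v` — if and only if `T_{v,e} = z_e · I_{H_{s(e)}}` for some scalar `z_e`
when `e` is a loop (`s(e) = r(e) = v`), and `T_{v,e} = 0` otherwise.
-/
theorem stmt15 {G0 G1 : Type*} [Countable G0] [Countable G1]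
    (s r : G1 → G0) (H : G0 → Type*)
    [∀ v, NormedAddCommGroup (H v)] [∀ v, InnerProductSpace ℂ (H v)]
    [∀ v, CompleteSpace (H v)]
    (T : ∀ (v : G0) (e : G1), H (s e) →L[ℂ] H v)
    (hbdd : ∃ C, ∀ v e, ‖T v e‖ ≤ C)
    (hsupp : ∀ (v : G0) (e : G1), r e ≠ v → T v e = 0) :
    (∀ a : ∀ v, H v →L[ℂ] H v, (∃ C, ∀ v, ‖a v‖ ≤ C) →
        ∀ (v : G0) (e : G1), (T v e).comp (a (s e)) = (a v).comp (T v e))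
    ↔ (∀ e : G1,
        (∀ h : s e = r e, ∃ z : ℂ,
            ∀ x : H (s e), T (r e) e x = z • cast (congrArg H h) x)
        ∧ (s e ≠ r e → T (r e) e = 0)) := by
  classical
  constructor
  · intro hcomm e
    constructor
    · intro h
      apply auxCast h (T (r e) e)
      intro k
      set a : ∀ v, H v →L[ℂ] H v :=
        fun v => if hv : s e = v then (hv ▸ k : H v →L[ℂ] H v) else 0 with ha
      have hnorm : ∀ v, ‖a v‖ ≤ ‖k‖ := by
        intro v
        by_cases hv : s e = v
        · subst hv
          rw [ha]
          simp only [dif_pos rfl]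
          exact le_refl _
        · rw [ha]
          simp only [dif_neg hv, norm_zero]
          exact norm_nonneg _
      have key := hcomm a ⟨‖k‖, hnorm⟩ (r e) e
      have h1 : a (s e) = k := by rw [ha]; simp
      have h2 : a (r e) = (h ▸ k : H (r e) →L[ℂ] H (r e)) := by
        simp only [ha]
        rw [dif_pos h]
      rw [h1, h2] at key
      exact key
    · intro hne
      have hnorm : ∀ v, ‖(fun v => if hv : s e = v then (0 : H v →L[ℂ] H v)
          else 1) v‖ ≤ 1 := by
        intro v
        by_cases hv : s e = v
        · simp [dif_pos hv]
        · simp only [dif_neg hv]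
          exact norm_id_le
      have key := hcomm _ ⟨1, hnorm⟩ (r e) e
      rw [show (if hv : s e = s e then (0 : H (s e) →L[ℂ] H (s e)) else 1) = 0
            from dif_pos rfl,
          show (if hv : s e = r e then (0 : H (r e) →L[ℂ] H (r e)) else 1) = 1
            from dif_neg hne] at key
      simpa [ContinuousLinearMap.one_def] using key.symm
  · intro hT a ha v e
    by_cases hv : r e = v
    · subst hv
      by_cases hse : s e = r e
      · obtain ⟨z, hz⟩ := (hT e).1 hse
        ext x
        simp only [coe_comp', Function.comp_apply]
        rw [hz (a (s e) x), hz x, map_smul, auxCast2 hse a x]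
      · rw [(hT e).2 hse]
        simp
    · rw [hsupp v e hv]
      simp
end
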